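/- arXiv:2307.09811 — 3 statements merged into one kernel-verified Lean document; each statement's English description precedes it below -/
import Mathlib

section
/- Let H be a real Hilbert space and K ⊆ H. Let n ≥ 1 and m ≥ 1 be integers and let v_1, …, v_{m+n−1} ∈ K be arbitrary. Set V_0 := {0} and V_i := span{v_1, …, v_i}. If the closed absolutely convex hull acx(K) admits an (n, ε)-cover, then ∏_{i=m}^{m+n−1} ‖v_i − Π_{V_{i−1}} v_i‖ ≤ n! · S_n · ε^n, where S_n := π^{n/2} / Γ(n/2 + 1) is the volume of the unit ball in ℝ^n and Π_W denotes the orthogonal projection onto the subspace W. -/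
/-!
Normalising the Gram–Schmidt residuals `rᵢ = vᵢ - Π_{V_{i-1}} vᵢ` (`m ≤ i < m + n`) gives an
orthonormal family `e`, and the matrix `(⟪eᵢ, vⱼ⟫)` is upper triangular with diagonal `‖rᵢ‖`.
So the linear map `c ↦ (⟪eᵢ, ∑ⱼ cⱼ vⱼ⟫)ᵢ` of `ℝⁿ` has determinant `∏ ‖rᵢ‖` and maps the `ℓ¹`
unit ball (volume `2ⁿ / n!`) onto a set of volume `∏ ‖rᵢ‖ · 2ⁿ / n!`. That set is the image of
part of `acx K` under the `1`-Lipschitz map `x ↦ (⟪eᵢ, x⟫)ᵢ`, hence is covered by `2ⁿ` balls of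
radius `ε` in `ℝⁿ`, of total volume at most `2ⁿ Sₙ εⁿ`.
-/

open scoped RealInnerProductSpace

variable {H : Type*} [NormedAddCommGroup H] [InnerProductSpace ℝ H]

/-- Orthogonal projection of `w` onto `V_i = span {v_1, …, v_i}` (with `V_0 = {0}`). -/
noncomputable def projSeq (v : ℕ → H) (i : ℕ) (w : H) : H :=
  haveI : FiniteDimensional ℝ (Submodule.span ℝ (v '' Set.Icc 1 i)) :=
    FiniteDimensional.span_of_finite ℝ ((Set.finite_Icc 1 i).image v)
  (Submodule.orthogonalProjectionOnto (Submodule.span ℝ (v '' Set.Icc 1 i)) w : H)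

/-- The closed absolutely convex (symmetric convex) hull of `K`. -/
def acx (K : Set H) : Set H :=
  closure {y : H | ∃ (m : ℕ) (c : Fin m → ℝ) (g : Fin m → H),
    (∀ j, g j ∈ K) ∧ (∑ j, |c j|) ≤ 1 ∧ y = ∑ j, c j • g j}

/-- `S` admits an `(n, ε)`-cover: it can be covered by at most `2^n` closed balls of
radius `ε`. -/
def HasCover (S : Set H) (n : ℕ) (ε : ℝ) : Prop :=
  ∃ (q : ℕ) (y : Fin q → H), q ≤ 2 ^ n ∧ S ⊆ ⋃ j, Metric.closedBall (y j) ε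

open scoped Nat
open MeasureTheory Finset

lemma zero_mem_acx (K : Set H) : (0 : H) ∈ acx K :=
  subset_closure ⟨0, 0, 0, fun j => j.elim0, by simp, by simp⟩

lemma sum_smul_mem_acx {ι : Type*} [Fintype ι] {K : Set H} {u : ι → H} (hu : ∀ i, u i ∈ K)
    {c : ι → ℝ} (hc : ∑ i, |c i| ≤ 1) : ∑ i, c i • u i ∈ acx K := by
  let σ := (Fintype.equivFin ι).symm
  refine subset_closure ⟨Fintype.card ι, c ∘ σ, u ∘ σ, fun j => hu (σ j), ?_, ?_⟩
  · simpa only [Function.comp_apply, σ.sum_comp (fun i => |c i|)] using hc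
  · exact (σ.sum_comp fun i => c i • u i).symm

section HasCover

variable {E F : Type*} [NormedAddCommGroup E] [NormedAddCommGroup F] {S : Set E} {n : ℕ}
  {ε : ℝ}

lemma HasCover.nonneg (h : HasCover S n ε) (hS : S.Nonempty) : 0 ≤ ε := by
  obtain ⟨q, y, -, hsub⟩ := h
  obtain ⟨x, hx⟩ := hS
  obtain ⟨j, hj⟩ := Set.mem_iUnion.mp (hsub hx)
  exact dist_nonneg.trans hj

lemma HasCover.mono {T : Set E} (h : HasCover S n ε) (hTS : T ⊆ S) : HasCover T n ε := by
  obtain ⟨q, y, hq, hS⟩ := h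
  exact ⟨q, y, hq, hTS.trans hS⟩

lemma HasCover.image (h : HasCover S n ε) {f : E → F} (hf : LipschitzWith 1 f) :
    HasCover (f '' S) n ε := by
  obtain ⟨q, y, hq, hS⟩ := h
  refine ⟨q, f ∘ y, hq, ?_⟩
  rintro _ ⟨x, hx, rfl⟩
  obtain ⟨j, hj⟩ := Set.mem_iUnion.mp (hS hx)
  have hfx := hf.mapsTo_closedBall (y j) ε hj
  rw [NNReal.coe_one, one_mul] at hfx
  exact Set.mem_iUnion.mpr ⟨j, hfx⟩

end HasCover

lemma HasCover.volume_le {ι : Type*} [Fintype ι] [Nonempty ι] {S : Set (EuclideanSpace ℝ ι)}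
    {n : ℕ} {ε : ℝ} (h : HasCover S n ε) :
    volume S ≤ 2 ^ n * (ENNReal.ofReal ε ^ Fintype.card ι * ENNReal.ofReal
      (Real.sqrt Real.pi ^ Fintype.card ι / Real.Gamma (Fintype.card ι / 2 + 1))) := by
  obtain ⟨q, y, hq, hS⟩ := h
  calc volume S ≤ volume (⋃ j, Metric.closedBall (y j) ε) := measure_mono hS
    _ ≤ ∑ j, volume (Metric.closedBall (y j) ε) := measure_iUnion_fintype_le _ _
    _ = q * (ENNReal.ofReal ε ^ Fintype.card ι * ENNReal.ofReal
          (Real.sqrt Real.pi ^ Fintype.card ι / Real.Gamma (Fintype.card ι / 2 + 1))) := by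
      simp only [EuclideanSpace.volume_closedBall, sum_const, card_univ, Fintype.card_fin,
        nsmul_eq_mul]
    _ ≤ _ := by gcongr; exact_mod_cast hq

lemma EuclideanSpace.volume_sum_abs_le_one (ι : Type*) [Fintype ι] [Nonempty ι] :
    volume {x : EuclideanSpace ℝ ι | ∑ i, |x i| ≤ 1}
      = ENNReal.ofReal (2 ^ Fintype.card ι / (Fintype.card ι)!) := by
  change volume ((MeasurableEquiv.toLp 2 (ι → ℝ)).symm ⁻¹' {x | ∑ i, |x i| ≤ 1}) = _
  rw [(EuclideanSpace.volume_preserving_symm_measurableEquiv_toLp ι).measure_preimage_equiv]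
  have h := volume_sum_rpow_le (ι := ι) le_rfl 1
  simp only [Real.rpow_one, one_div_one] at h
  rw [h, ENNReal.ofReal_one, one_pow, one_mul, one_add_one_eq_two, Real.Gamma_two, mul_one,
    div_one, Real.Gamma_nat_eq_factorial]

noncomputable def innerCoords {ι : Type*} (e : ι → H) : H →ₗ[ℝ] EuclideanSpace ℝ ι :=
  (WithLp.linearEquiv 2 ℝ (ι → ℝ)).symm.toLinearMap ∘ₗ LinearMap.pi fun i => innerₛₗ ℝ (e i)

@[simp]
lemma innerCoords_apply {ι : Type*} (e : ι → H) (x : H) (i : ι) :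
    innerCoords e x i = ⟪e i, x⟫ := rfl

lemma Orthonormal.norm_innerCoords_le {ι : Type*} [Fintype ι] {e : ι → H}
    (he : Orthonormal ℝ e) (x : H) : ‖innerCoords e x‖ ≤ ‖x‖ := by
  rw [EuclideanSpace.norm_eq, ← Real.sqrt_sq (norm_nonneg x)]
  gcongr
  simpa using he.sum_inner_products_le (x := x) (s := univ)

lemma Orthonormal.lipschitzWith_innerCoords {ι : Type*} [Fintype ι] {e : ι → H}
    (he : Orthonormal ℝ e) : LipschitzWith 1 (innerCoords e) :=
  LipschitzWith.of_dist_le_mul fun x y => by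
    simpa [dist_eq_norm, ← map_sub] using he.norm_innerCoords_le (x - y)

noncomputable def euclideanCombination {ι : Type*} [Fintype ι] (u : ι → H) :
    EuclideanSpace ℝ ι →ₗ[ℝ] H :=
  Fintype.linearCombination ℝ u ∘ₗ (WithLp.linearEquiv 2 ℝ (ι → ℝ)).toLinearMap

lemma euclideanCombination_apply {ι : Type*} [Fintype ι] (u : ι → H) (c : EuclideanSpace ℝ ι) :
    euclideanCombination u c = ∑ i, c i • u i := rfl

lemma det_innerCoords_comp_euclideanCombination {ι : Type*} [Fintype ι] [DecidableEq ι]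
    (e u : ι → H) :
    LinearMap.det (innerCoords e ∘ₗ euclideanCombination u)
      = (Matrix.of fun i j => ⟪e i, u j⟫).det := by
  rw [← LinearMap.det_toMatrix (PiLp.basisFun 2 ℝ ι)]
  congr 1
  ext i j
  simp [LinearMap.toMatrix_apply, euclideanCombination_apply]

lemma abs_det_inner_le_of_hasCover {ι : Type*} [Fintype ι] [Nonempty ι] [DecidableEq ι]
    {K : Set H} {e u : ι → H} (he : Orthonormal ℝ e) (hu : ∀ i, u i ∈ K) {ε : ℝ}
    (hcov : HasCover (acx K) (Fintype.card ι) ε) :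
    |(Matrix.of fun i j => ⟪e i, u j⟫).det|
      ≤ (Fintype.card ι)! * (Real.pi ^ ((Fintype.card ι : ℝ) / 2)
        / Real.Gamma ((Fintype.card ι : ℝ) / 2 + 1)) * ε ^ Fintype.card ι := by
  set N := Fintype.card ι
  set β := Real.sqrt Real.pi ^ N / Real.Gamma (N / 2 + 1)
  have hε : 0 ≤ ε := hcov.nonneg ⟨0, zero_mem_acx K⟩
  set T := innerCoords e ∘ₗ euclideanCombination u
  have hT : HasCover (T '' {c | ∑ i, |c i| ≤ 1}) N ε := by
    refine (hcov.image he.lipschitzWith_innerCoords).mono ?_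
    rintro _ ⟨c, hc, rfl⟩
    exact ⟨_, sum_smul_mem_acx hu hc, rfl⟩
  have hvol := hT.volume_le
  rw [Measure.addHaar_image_linearMap, EuclideanSpace.volume_sum_abs_le_one,
    det_innerCoords_comp_euclideanCombination] at hvol
  have hreal : |(Matrix.of fun i j => ⟪e i, u j⟫).det| * (2 ^ N / N !) ≤ 2 ^ N * (ε ^ N * β) := by
    rwa [← ENNReal.ofReal_le_ofReal_iff (by positivity), ENNReal.ofReal_mul (abs_nonneg _),
      ENNReal.ofReal_mul (by positivity), ENNReal.ofReal_mul (by positivity),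
      ENNReal.ofReal_pow hε, ENNReal.ofReal_pow zero_le_two, ENNReal.ofReal_ofNat]
  rw [Real.rpow_div_two_eq_sqrt _ Real.pi_pos.le, Real.rpow_natCast]
  have hN : (0 : ℝ) < N ! := by exact_mod_cast N.factorial_pos
  calc _ = |(Matrix.of fun i j => ⟪e i, u j⟫).det| * (2 ^ N / N !) * (N ! / 2 ^ N) := by
        field_simp
    _ ≤ 2 ^ N * (ε ^ N * β) * (N ! / 2 ^ N) := by gcongr
    _ = N ! * β * ε ^ N := by field_simp

lemma orthonormal_inv_norm_smul {ι : Type*} {w : ι → H} (hw : ∀ i, w i ≠ 0)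
    (horth : Pairwise fun i j => ⟪w i, w j⟫ = 0) : Orthonormal ℝ fun i => ‖w i‖⁻¹ • w i := by
  refine ⟨fun i => ?_, fun i j hij => ?_⟩
  · rw [norm_smul, norm_inv, norm_norm, inv_mul_cancel₀ (norm_ne_zero_iff.mpr (hw i))]
  · change ⟪‖w i‖⁻¹ • w i, ‖w j‖⁻¹ • w j⟫ = 0
    rw [real_inner_smul_left, real_inner_smul_right, horth hij, mul_zero, mul_zero]

section GramSchmidt

variable (v : ℕ → H)

def spanSeq (i : ℕ) : Submodule ℝ H := Submodule.span ℝ (v '' Set.Icc 1 i)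

instance (i : ℕ) : FiniteDimensional ℝ (spanSeq v i) :=
  FiniteDimensional.span_of_finite ℝ ((Set.finite_Icc 1 i).image v)

lemma projSeq_mem_spanSeq (i : ℕ) (x : H) : projSeq v i x ∈ spanSeq v i :=
  Submodule.starProjection_apply_mem _ x

lemma sub_projSeq_mem_orthogonal (i : ℕ) (x : H) : x - projSeq v i x ∈ (spanSeq v i)ᗮ :=
  Submodule.sub_starProjection_mem_orthogonal x

lemma spanSeq_mono : Monotone (spanSeq v) := fun _ _ h =>
  Submodule.span_mono (Set.image_mono (Set.Icc_subset_Icc_right h))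

lemma apply_mem_spanSeq {i k : ℕ} (hk : 1 ≤ k) (hki : k ≤ i) : v k ∈ spanSeq v i :=
  Submodule.subset_span ⟨k, ⟨hk, hki⟩, rfl⟩

noncomputable def orthResidual (i : ℕ) : H := v i - projSeq v (i - 1) (v i)

variable {v}

lemma orthResidual_mem_spanSeq {i : ℕ} (hi : 1 ≤ i) : orthResidual v i ∈ spanSeq v i :=
  Submodule.sub_mem _ (apply_mem_spanSeq v hi le_rfl)
    (spanSeq_mono v (Nat.sub_le i 1) (projSeq_mem_spanSeq v _ _))

lemma inner_orthResidual_eq_zero {i : ℕ} {x : H} (hx : x ∈ spanSeq v (i - 1)) :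
    ⟪orthResidual v i, x⟫ = 0 :=
  Submodule.inner_left_of_mem_orthogonal hx (sub_projSeq_mem_orthogonal v _ _)

lemma inner_orthResidual_self (i : ℕ) : ⟪orthResidual v i, v i⟫ = ‖orthResidual v i‖ ^ 2 := by
  conv_lhs => rw [← sub_add_cancel (v i) (projSeq v (i - 1) (v i))]
  rw [inner_add_right, inner_orthResidual_eq_zero (projSeq_mem_spanSeq v _ _), add_zero,
    ← real_inner_self_eq_norm_sq]
  rfl

lemma inner_orthResidual_apply_of_lt {i k : ℕ} (hk : 1 ≤ k) (hki : k < i) :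
    ⟪orthResidual v i, v k⟫ = 0 :=
  inner_orthResidual_eq_zero (apply_mem_spanSeq v hk (by omega))

lemma inner_orthResidual_orthResidual_of_lt {i k : ℕ} (hk : 1 ≤ k) (hki : k < i) :
    ⟪orthResidual v i, orthResidual v k⟫ = 0 :=
  inner_orthResidual_eq_zero (spanSeq_mono v (by omega) (orthResidual_mem_spanSeq hk))

lemma pairwise_inner_orthResidual {m : ℕ} (hm : 1 ≤ m) (n : ℕ) :
    Pairwise fun i j : Fin n => ⟪orthResidual v (m + i), orthResidual v (m + j)⟫ = 0 := by
  intro i j hij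
  rcases (Fin.val_injective.ne hij).lt_or_gt with h | h
  · rw [real_inner_comm]
    exact inner_orthResidual_orthResidual_of_lt (by omega) (by omega)
  · exact inner_orthResidual_orthResidual_of_lt (by omega) (by omega)

lemma det_inner_inv_norm_smul_orthResidual {m : ℕ} (hm : 1 ≤ m) (n : ℕ) :
    (Matrix.of fun i j : Fin n =>
        ⟪‖orthResidual v (m + i)‖⁻¹ • orthResidual v (m + i), v (m + j)⟫).det
      = ∏ j : Fin n, ‖orthResidual v (m + j)‖ := by
  rw [Matrix.det_of_isUpperTriangular]
  · refine prod_congr rfl fun j _ => ?_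
    rw [Matrix.of_apply, real_inner_smul_left, inner_orthResidual_self, sq, ← mul_assoc,
      inv_mul_mul_self]
  · intro i j hji
    rw [Matrix.of_apply, real_inner_smul_left,
      inner_orthResidual_apply_of_lt (by omega) (by simpa using hji), mul_zero]

end GramSchmidt

theorem statement_0
    (K : Set H) (n m : ℕ) (hn : 1 ≤ n) (hm : 1 ≤ m)
    (v : ℕ → H) (hv : ∀ i, 1 ≤ i → i ≤ m + n - 1 → v i ∈ K)
    (ε : ℝ) (hcov : HasCover (acx K) n ε) :
    ∏ i ∈ Finset.Icc m (m + n - 1), ‖v i - projSeq v (i - 1) (v i)‖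
      ≤ (n.factorial : ℝ) * (Real.pi ^ ((n : ℝ) / 2) / Real.Gamma ((n : ℝ) / 2 + 1))
        * ε ^ n := by
  have : Nonempty (Fin n) := ⟨⟨0, hn⟩⟩
  have hIco : Icc m (m + n - 1) = Ico m (m + n) := by
    ext
    simp only [mem_Icc, mem_Ico]
    omega
  rw [hIco, prod_Ico_eq_prod_range, Nat.add_sub_cancel_left, ← Fin.prod_univ_eq_prod_range]
  change ∏ j : Fin n, ‖orthResidual v (m + j)‖ ≤ _
  by_cases hr : ∃ j : Fin n, orthResidual v (m + j) = 0
  · obtain ⟨j, hj⟩ := hr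
    have hε : 0 ≤ ε := hcov.nonneg ⟨0, zero_mem_acx K⟩
    rw [prod_eq_zero (mem_univ j) (by rw [hj, norm_zero])]
    positivity
  have he := orthonormal_inv_norm_smul (not_exists.mp hr) (pairwise_inner_orthResidual hm n)
  have key := abs_det_inner_le_of_hasCover he (u := fun j : Fin n => v (m + j))
    (fun j => hv _ (by omega) (by omega)) (by rwa [Fintype.card_fin])
  rwa [det_inner_inv_norm_smul_orthResidual hm,
    abs_of_nonneg (prod_nonneg fun _ _ => norm_nonneg _), Fintype.card_fin] at key
end

section
/- For every integer n ≥ 1 one has n! · π^{n/2} / Γ(n/2 + 1) ≤ 5^{n/2} · n^{n/2}; equivalently, (n! · S_n)^{1/n} ≤ √5 · n^{1/2}, where S_n := π^{n/2} / Γ(n/2 + 1) is the volume of the unit ball in ℝ^n. -/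
open Real

lemma aux_fact (m j : ℕ) : (m + j).factorial ≤ m.factorial * (m + j) ^ j := by
  induction j with
  | zero => simp
  | succ j ih =>
    calc (m + (j + 1)).factorial = (m + j + 1) * (m + j).factorial := by
          rw [← Nat.add_assoc, Nat.factorial_succ]
      _ ≤ (m + j + 1) * (m.factorial * (m + j) ^ j) := Nat.mul_le_mul_left _ ih
      _ ≤ (m + j + 1) * (m.factorial * (m + j + 1) ^ j) :=
          Nat.mul_le_mul_left _ (Nat.mul_le_mul_left _ (Nat.pow_le_pow_left (Nat.le_succ _) j))
      _ = m.factorial * (m + (j + 1)) ^ (j + 1) := by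
          rw [← Nat.add_assoc, pow_succ]; ring

lemma key3 (m : ℕ) : ((2 * m + 3 : ℕ) : ℝ) * Real.pi ^ (2 * m + 3) ≤ 5 ^ (2 * m + 3) := by
  have hpi : Real.pi < 3.15 := Real.pi_lt_d2
  have hpos : (0 : ℝ) < Real.pi := Real.pi_pos
  induction m with
  | zero =>
    norm_num
    nlinarith [sq_nonneg Real.pi, sq_nonneg (Real.pi - 3.15)]
  | succ k ih =>
    have hp : (0 : ℝ) < Real.pi ^ (2 * k + 3) := by positivity
    have hk : (0 : ℝ) ≤ (k : ℝ) := Nat.cast_nonneg k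
    have e : 2 * (k + 1) + 3 = (2 * k + 3) + 2 := by ring
    rw [e, pow_add Real.pi, pow_add (5:ℝ)]
    have hsq : Real.pi ^ 2 ≤ 10 := by nlinarith
    push_cast at ih ⊢
    set P := Real.pi ^ (2 * k + 3) with hP
    set F := (5:ℝ) ^ (2 * k + 3) with hF
    have h1 : P * Real.pi ^ 2 ≤ P * 10 := mul_le_mul_of_nonneg_left hsq hp.le
    have h2 : (k:ℝ) * (P * Real.pi ^ 2) ≤ (k:ℝ) * (P * 10) :=
      mul_le_mul_of_nonneg_left h1 hk
    have h3 : (k:ℝ) * P ≤ (k:ℝ) * P := le_refl _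
    nlinarith [ih, h1, h2, hp, mul_nonneg hk hp.le]

lemma key (m : ℕ) : ((2 * m + 1 : ℕ) : ℝ) * Real.pi ^ (2 * m + 1) ≤ 5 ^ (2 * m + 1) := by
  cases m with
  | zero =>
    have h5 : Real.pi ≤ 5 := by nlinarith [Real.pi_lt_d2]
    simpa using h5
  | succ k =>
    have := key3 k
    have e : 2 * (k + 1) + 1 = 2 * k + 3 := by ring
    rw [e]
    exact this

/-- For every `n ≥ 1`, `n! · S_n ≤ 5^{n/2} · n^{n/2}` where
`S_n = π^{n/2} / Γ(n/2 + 1)` is the volume of the unit ball in `ℝ^n`;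
equivalently `(n! · S_n)^{1/n} ≤ √5 · n^{1/2}`. -/
theorem statement_1 (n : ℕ) (hn : 1 ≤ n) :
    (n.factorial : ℝ) * (Real.pi ^ ((n : ℝ) / 2) / Real.Gamma ((n : ℝ) / 2 + 1))
      ≤ (5 : ℝ) ^ ((n : ℝ) / 2) * (n : ℝ) ^ ((n : ℝ) / 2) := by
  have hπ := Real.pi_pos
  have hs : ∀ x : ℝ, 0 ≤ x → x ^ ((n : ℝ) / 2) = Real.sqrt x ^ n := by
    intro x hx
    rw [Real.rpow_div_two_eq_sqrt _ hx, Real.rpow_natCast]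
  rw [hs Real.pi hπ.le, hs 5 (by norm_num), hs n (Nat.cast_nonneg n)]
  rcases Nat.even_or_odd n with ⟨m, hm⟩ | ⟨m, hm⟩
  · -- even case, n = m + m
    subst hm
    have hm1 : 1 ≤ m := by omega
    have hΓ : Real.Gamma (((m + m : ℕ) : ℝ) / 2 + 1) = m.factorial := by
      have : ((m + m : ℕ) : ℝ) / 2 = (m : ℝ) := by push_cast; ring
      rw [this, Real.Gamma_nat_eq_factorial]
    have hsq : ∀ x : ℝ, 0 ≤ x → Real.sqrt x ^ (m + m) = x ^ m := by
      intro x hx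
      rw [pow_add, ← mul_pow, Real.mul_self_sqrt hx]
    rw [hΓ, hsq Real.pi hπ.le, hsq 5 (by norm_num), hsq _ (Nat.cast_nonneg _)]
    have h1 : (((m + m).factorial : ℕ) : ℝ) ≤ (m.factorial : ℝ) * ((m + m : ℕ) : ℝ) ^ m := by
      exact_mod_cast aux_fact m m
    have h2 : Real.pi ^ m ≤ (5 : ℝ) ^ m :=
      pow_le_pow_left₀ hπ.le (by nlinarith [Real.pi_lt_d2]) m
    have hfpos : (0 : ℝ) < (m.factorial : ℝ) := by exact_mod_cast m.factorial_pos
    rw [mul_div_assoc', div_le_iff₀ hfpos]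
    calc ((m + m).factorial : ℝ) * Real.pi ^ m
        ≤ (m.factorial : ℝ) * ((m + m : ℕ) : ℝ) ^ m * (5 : ℝ) ^ m :=
          mul_le_mul h1 h2 (by positivity) (by positivity)
      _ = (5 : ℝ) ^ m * ((m + m : ℕ) : ℝ) ^ m * (m.factorial : ℝ) := by ring
  · -- odd case, n = 2 * m + 1
    subst hm
    have harg : ((2 * m + 1 : ℕ) : ℝ) / 2 + 1 = (m : ℝ) + 3 / 2 := by push_cast; ring
    rw [harg]
    have hΓpos : 0 < Real.Gamma ((m : ℝ) + 3 / 2) :=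
      Real.Gamma_pos_of_pos (by positivity)
    rcases Nat.eq_zero_or_pos m with rfl | hm1
    · -- n = 1
      have h12 : ((0 : ℕ) : ℝ) + 3 / 2 = 1 / 2 + 1 := by norm_num
      rw [h12, Real.Gamma_add_one (by norm_num), Real.Gamma_one_half_eq]
      have hsπ : 0 < Real.sqrt Real.pi := Real.sqrt_pos.mpr hπ
      have : (2 : ℝ) ≤ Real.sqrt 5 := by
        nlinarith [Real.sq_sqrt (by norm_num : (5:ℝ) ≥ 0), Real.sqrt_nonneg (5:ℝ)]
      have h2eq : Real.sqrt Real.pi ^ (2 * 0 + 1) / (1 / 2 * Real.sqrt Real.pi) = 2 := by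
        norm_num
        field_simp
      rw [h2eq]
      norm_num
      linarith [this]
    · -- m ≥ 1
      have hΓ : (m.factorial : ℝ) ≤ Real.Gamma ((m : ℝ) + 3 / 2) := by
        have h1 : Real.Gamma ((m : ℝ) + 1) = m.factorial := Real.Gamma_nat_eq_factorial m
        have h2 : Real.Gamma ((m : ℝ) + 1) < Real.Gamma ((m : ℝ) + 3 / 2) := by
          apply Real.Gamma_strictMonoOn_Ici
          · simp only [Set.mem_Ici]
            have : (1 : ℝ) ≤ (m : ℝ) := by exact_mod_cast hm1
            linarith
          · simp only [Set.mem_Ici]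
            have : (1 : ℝ) ≤ (m : ℝ) := by exact_mod_cast hm1
            linarith
          · linarith
        linarith
      have hfpos : (0 : ℝ) < (m.factorial : ℝ) := by exact_mod_cast m.factorial_pos
      have hf : (((2 * m + 1).factorial : ℕ) : ℝ)
          ≤ (m.factorial : ℝ) * ((2 * m + 1 : ℕ) : ℝ) ^ (m + 1) := by
        have := aux_fact m (m + 1)
        have e : m + (m + 1) = 2 * m + 1 := by ring
        rw [e] at this
        exact_mod_cast this
      set N : ℝ := ((2 * m + 1 : ℕ) : ℝ) with hN
      have hNpos : (0 : ℝ) < N := by positivity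
      have step1 : ((2 * m + 1).factorial : ℝ) * (Real.sqrt Real.pi ^ (2 * m + 1) / Real.Gamma ((m : ℝ) + 3 / 2))
          ≤ ((2 * m + 1).factorial : ℝ) * (Real.sqrt Real.pi ^ (2 * m + 1) / (m.factorial : ℝ)) := by
        apply mul_le_mul_of_nonneg_left _ (by positivity)
        exact div_le_div_of_nonneg_left (by positivity) hfpos hΓ
      refine step1.trans ?_
      rw [mul_div_assoc', div_le_iff₀ hfpos]
      have final : N ^ (m + 1) * Real.sqrt Real.pi ^ (2 * m + 1)
          ≤ Real.sqrt 5 ^ (2 * m + 1) * Real.sqrt N ^ (2 * m + 1) := by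
        have ha : (0 : ℝ) ≤ N ^ (m + 1) * Real.sqrt Real.pi ^ (2 * m + 1) := by positivity
        have hb : (0 : ℝ) ≤ Real.sqrt 5 ^ (2 * m + 1) * Real.sqrt N ^ (2 * m + 1) := by positivity
        have hsq2 : ∀ x : ℝ, 0 ≤ x → (Real.sqrt x ^ (2 * m + 1)) ^ 2 = x ^ (2 * m + 1) := by
          intro x hx
          rw [← pow_mul, mul_comm (2 * m + 1) 2, pow_mul, Real.sq_sqrt hx]
        have h2 : (N ^ (m + 1) * Real.sqrt Real.pi ^ (2 * m + 1)) ^ 2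
            ≤ (Real.sqrt 5 ^ (2 * m + 1) * Real.sqrt N ^ (2 * m + 1)) ^ 2 := by
          rw [mul_pow, mul_pow, hsq2 Real.pi hπ.le, hsq2 5 (by norm_num), hsq2 N hNpos.le,
            ← pow_mul]
          have e2 : (m + 1) * 2 = (2 * m + 1) + 1 := by ring
          rw [e2, pow_succ]
          have hkey : N * Real.pi ^ (2 * m + 1) ≤ 5 ^ (2 * m + 1) := key m
          calc N ^ (2 * m + 1) * N * Real.pi ^ (2 * m + 1)
              = N * Real.pi ^ (2 * m + 1) * N ^ (2 * m + 1) := by ring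
            _ ≤ 5 ^ (2 * m + 1) * N ^ (2 * m + 1) :=
                mul_le_mul_of_nonneg_right hkey (by positivity)
        calc N ^ (m + 1) * Real.sqrt Real.pi ^ (2 * m + 1)
            = Real.sqrt ((N ^ (m + 1) * Real.sqrt Real.pi ^ (2 * m + 1)) ^ 2) :=
              (Real.sqrt_sq ha).symm
          _ ≤ Real.sqrt ((Real.sqrt 5 ^ (2 * m + 1) * Real.sqrt N ^ (2 * m + 1)) ^ 2) :=
              Real.sqrt_le_sqrt h2
          _ = Real.sqrt 5 ^ (2 * m + 1) * Real.sqrt N ^ (2 * m + 1) := Real.sqrt_sq hb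
      calc ((2 * m + 1).factorial : ℝ) * Real.sqrt Real.pi ^ (2 * m + 1)
          ≤ (m.factorial : ℝ) * N ^ (m + 1) * Real.sqrt Real.pi ^ (2 * m + 1) :=
            mul_le_mul_of_nonneg_right hf (by positivity)
        _ = (m.factorial : ℝ) * (N ^ (m + 1) * Real.sqrt Real.pi ^ (2 * m + 1)) := by ring
        _ ≤ (m.factorial : ℝ) * (Real.sqrt 5 ^ (2 * m + 1) * Real.sqrt N ^ (2 * m + 1)) :=
            mul_le_mul_of_nonneg_left final hfpos.le
        _ = Real.sqrt 5 ^ (2 * m + 1) * Real.sqrt N ^ (2 * m + 1) * (m.factorial : ℝ) := by ring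
end

section
/- Let f ∈ H, let X ⊆ Ω be finite, and set r := f − I_X f. Let β ∈ [0,1] and γ ∈ (0,1], and suppose x⁺ ∈ Ω satisfies the weak selection inequality γ · |r(z)|^β · P_X(z)^{1−β} ≤ |r(x⁺)|^β · P_X(x⁺)^{1−β} for all z ∈ Ω. Then for every x ∈ Ω, |r(x)| ≤ γ^{−1} · |r(x⁺)|^β · P_X(x⁺)^{1−β} · ‖r‖_H^{1−β}; in particular ‖r‖_∞ ≤ γ^{−1} |r(x⁺)|^β P_X(x⁺)^{1−β} ‖r‖_H^{1−β}. -/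
open scoped RealInnerProductSpace

variable {H : Type*} [NormedAddCommGroup H] [InnerProductSpace ℝ H] {Ω : Type*}

/-- The kernel interpolant `I_X f`: the orthogonal projection of `f` onto
`V(X) = span {Φ(x) : x ∈ X}`. -/
noncomputable def interp (Φ : Ω → H) (X : Finset Ω) (f : H) : H :=
  haveI : FiniteDimensional ℝ (Submodule.span ℝ (Φ '' (X : Set Ω))) :=
    FiniteDimensional.span_of_finite ℝ (X.finite_toSet.image Φ)
  (Submodule.orthogonalProjectionOnto (Submodule.span ℝ (Φ '' (X : Set Ω))) f : H)

/-- The power function `P_X(z) = ‖Φ(z) − Π_{V(X)} Φ(z)‖`. -/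
noncomputable def powerFun (Φ : Ω → H) (X : Finset Ω) (z : Ω) : ℝ :=
  ‖Φ z - interp Φ X (Φ z)‖

/-- The sup norm `‖g‖_∞ = sup_{x ∈ Ω} |g(x)|`, where `g(x) = ⟪g, Φ(x)⟫`. -/
noncomputable def supNorm (Φ : Ω → H) (g : H) : ℝ := ⨆ x : Ω, |⟪g, Φ x⟫|

/-!
The residual `r = f - I_X f` is orthogonal to `V(X)`, so `r(x) = ⟪r, Φ x - Π Φ x⟫` and
`|r(x)| ≤ ‖r‖ P_X(x)`. Writing `|r(x)| = |r(x)|^β |r(x)|^(1-β)` and bounding only the second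
factor this way gives `|r(x)| ≤ |r(x)|^β P_X(x)^(1-β) ‖r‖^(1-β)`, and the selection rule bounds
the selection quantity at `x` by `γ⁻¹` times its value at `x⁺`.
-/

lemma Submodule.norm_inner_sub_starProjection_le {𝕜 E : Type*} [RCLike 𝕜] [NormedAddCommGroup E]
    [InnerProductSpace 𝕜 E] (K : Submodule 𝕜 E) [K.HasOrthogonalProjection] (v w : E) :
    ‖inner 𝕜 (v - K.starProjection v) w‖
      ≤ ‖v - K.starProjection v‖ * ‖w - K.starProjection w‖ := by
  have h : inner 𝕜 (v - K.starProjection v) w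
      = inner 𝕜 (v - K.starProjection v) (w - K.starProjection w) := by
    rw [inner_sub_right, K.starProjection_inner_eq_zero v _ (K.starProjection_apply_mem w),
      sub_zero]
  rw [h]
  exact norm_inner_le_norm _ _

lemma abs_inner_sub_interp_le (Φ : Ω → H) (X : Finset Ω) (f : H) (x : Ω) :
    |⟪f - interp Φ X f, Φ x⟫| ≤ ‖f - interp Φ X f‖ * powerFun Φ X x := by
  have : FiniteDimensional ℝ (Submodule.span ℝ (Φ '' (X : Set Ω))) :=
    FiniteDimensional.span_of_finite ℝ (X.finite_toSet.image Φ)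
  exact (Submodule.span ℝ (Φ '' (X : Set Ω))).norm_inner_sub_starProjection_le f (Φ x)

lemma Real.le_rpow_mul_rpow_mul_rpow_of_le_mul {a b p β : ℝ} (ha : 0 ≤ a) (hb : 0 ≤ b)
    (hp : 0 ≤ p) (hβ : β ≤ 1) (h : a ≤ b * p) :
    a ≤ a ^ β * p ^ (1 - β) * b ^ (1 - β) := by
  rcases ha.eq_or_lt with rfl | ha
  · positivity
  calc a = a ^ β * a ^ (1 - β) := by rw [← Real.rpow_add ha, add_sub_cancel, Real.rpow_one]
    _ ≤ a ^ β * (b * p) ^ (1 - β) := by gcongr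
    _ = a ^ β * p ^ (1 - β) * b ^ (1 - β) := by rw [Real.mul_rpow hb hp]; ring

theorem statement_2_general
    (Φ : Ω → H)
    (f : H) (X : Finset Ω) (β γ : ℝ)
    (hβ1 : β ≤ 1) (hγ0 : 0 < γ) (xp : Ω)
    (hsel : ∀ z : Ω,
      γ * |⟪f - interp Φ X f, Φ z⟫| ^ β * powerFun Φ X z ^ (1 - β)
        ≤ |⟪f - interp Φ X f, Φ xp⟫| ^ β * powerFun Φ X xp ^ (1 - β)) :
    (∀ x : Ω, |⟪f - interp Φ X f, Φ x⟫|
        ≤ γ⁻¹ * |⟪f - interp Φ X f, Φ xp⟫| ^ β * powerFun Φ X xp ^ (1 - β)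
            * ‖f - interp Φ X f‖ ^ (1 - β))
    ∧ supNorm Φ (f - interp Φ X f)
        ≤ γ⁻¹ * |⟪f - interp Φ X f, Φ xp⟫| ^ β * powerFun Φ X xp ^ (1 - β)
            * ‖f - interp Φ X f‖ ^ (1 - β) := by
  set r := f - interp Φ X f
  have pointwise (x : Ω) : |⟪r, Φ x⟫|
      ≤ γ⁻¹ * |⟪r, Φ xp⟫| ^ β * powerFun Φ X xp ^ (1 - β) * ‖r‖ ^ (1 - β) := by
    have hsel_x : |⟪r, Φ x⟫| ^ β * powerFun Φ X x ^ (1 - β)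
        ≤ γ⁻¹ * |⟪r, Φ xp⟫| ^ β * powerFun Φ X xp ^ (1 - β) := by
      rw [mul_assoc, le_inv_mul_iff₀ hγ0, ← mul_assoc]
      exact hsel x
    calc |⟪r, Φ x⟫| ≤ |⟪r, Φ x⟫| ^ β * powerFun Φ X x ^ (1 - β) * ‖r‖ ^ (1 - β) :=
          Real.le_rpow_mul_rpow_mul_rpow_of_le_mul (abs_nonneg _) (norm_nonneg _)
            (norm_nonneg _) hβ1 (abs_inner_sub_interp_le Φ X f x)
      _ ≤ _ := by gcongr
  refine ⟨pointwise, Real.iSup_le pointwise ?_⟩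
  have hP : 0 ≤ powerFun Φ X xp := norm_nonneg _
  positivity

theorem statement_2 [Nonempty Ω]
    (Φ : Ω → H) (hΦ : ∀ z : Ω, ‖Φ z‖ ≤ 1)
    (f : H) (X : Finset Ω) (β γ : ℝ)
    (hβ0 : 0 ≤ β) (hβ1 : β ≤ 1) (hγ0 : 0 < γ) (hγ1 : γ ≤ 1) (xp : Ω)
    (hsel : ∀ z : Ω,
      γ * |⟪f - interp Φ X f, Φ z⟫| ^ β * powerFun Φ X z ^ (1 - β)
        ≤ |⟪f - interp Φ X f, Φ xp⟫| ^ β * powerFun Φ X xp ^ (1 - β)) :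
    (∀ x : Ω, |⟪f - interp Φ X f, Φ x⟫|
        ≤ γ⁻¹ * |⟪f - interp Φ X f, Φ xp⟫| ^ β * powerFun Φ X xp ^ (1 - β)
            * ‖f - interp Φ X f‖ ^ (1 - β))
    ∧ supNorm Φ (f - interp Φ X f)
        ≤ γ⁻¹ * |⟪f - interp Φ X f, Φ xp⟫| ^ β * powerFun Φ X xp ^ (1 - β)
            * ‖f - interp Φ X f‖ ^ (1 - β) :=
  statement_2_general Φ f X β γ hβ1 hγ0 xp hsel
end
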